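/- For every integer δ ≥ 0 and every integer x ≥ 1, there exists a finite simple graph G and a vertex v of G such that k(v) − k̆_δ(v) = x − 1. -/

import Mathlib

open SimpleGraph

variable {V : Type*}

/-- The degree of `u` inside the subgraph of `G` induced on the vertex set `S`. -/
noncomputable def degIn (G : SimpleGraph V) (S : Set V) (u : V) : ℕ :=
  {w ∈ S | G.Adj u w}.ncard

/-- `v` belongs to the `k`-core of `G`: there is a vertex set containing `v` all of whose
vertices have degree at least `k` within the induced subgraph. -/
def inCore (G : SimpleGraph V) (k : ℕ) (v : V) : Prop :=
  ∃ S : Set V, v ∈ S ∧ ∀ u ∈ S, k ≤ degIn G S u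

/-- The core number of `v`: the largest `k` such that `v` belongs to the `k`-core of `G`. -/
noncomputable def coreNumber (G : SimpleGraph V) (v : V) : ℕ :=
  sSup {k | inCore G k v}

/-- Degree of a vertex. -/
noncomputable def deg (G : SimpleGraph V) (v : V) : ℕ :=
  (G.neighborSet v).ncard

/-- The `δ`-neighborhood of `v`: all vertices at shortest-path distance at most `δ` from `v`. -/
def ball (G : SimpleGraph V) (v : V) (δ : ℕ) : Set V :=
  {u | G.Reachable v u ∧ G.dist v u ≤ δ}

/-- The induced estimator `k̆_δ(v)`: the core number of `v` in `G[N_δ(v)]`. -/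
noncomputable def kBreve (G : SimpleGraph V) (v : V) (δ : ℕ) : ℕ :=
  coreNumber (G.induce (_root_.ball G v δ)) ⟨v, Reachable.refl v, by rw [SimpleGraph.dist_self]; exact Nat.zero_le _⟩

/-- Neighborhood of `v` as a `Finset`. -/
noncomputable def nbhd (G : SimpleGraph V) [Finite V] (v : V) : Finset V :=
  (G.neighborSet v).toFinite.toFinset

/-- The propagating estimator `k̂_δ(v)`: `k̂_0(v) = d(v)`, and `k̂_δ(v)` is the max over
`1 ≤ i ≤ d(v)` of `min (k̂_{δ-1}(u_i)) (d(v) - i + 1)`, where `u_1, …, u_{d(v)}` are the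
neighbors of `v` listed with `k̂_{δ-1}`-values nondecreasing.  In the formalization the
sorted list `l` of the neighbors' `k̂_{δ-1}`-values is indexed from `0`, so entry `i` of `l`
is `k̂_{δ-1}(u_{i+1})` and `d(v) - i = d(v) - (i+1) + 1`. -/
noncomputable def kHat (G : SimpleGraph V) [Finite V] : ℕ → V → ℕ
  | 0, v => deg G v
  | δ + 1, v =>
    let l : List ℕ := Multiset.sort ((nbhd G v).val.map (kHat G δ)) (· ≤ ·)
    (Finset.range l.length).sup fun i => min (l.getD i 0) (deg G v - i)

/-!
For `δ = 0` the ball `N₀(v)` is `{v}`, so `k̆₀(v) = 0`, while every vertex of `K_x` has core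
number `x - 1`. For `δ ≥ 1` take the complete `x`-ary tree of depth `δ + 1` and join all its
leaves into a clique. Every vertex then has degree at least `x` and the root has degree `x`, so
the core number of the root is `x`; but the `δ`-ball of the root is a subtree, so
`k̆_δ(root) = 1`. Core numbers and `k̆_δ` are invariant under graph isomorphism, which moves the example onto `Fin n`.
-/

section CoreNumber

variable {W : Type*} {G : SimpleGraph V} {H : SimpleGraph W} {k : ℕ} {v : V}

theorem degIn_univ (G : SimpleGraph V) (u : V) : degIn G Set.univ u = deg G u := by
  simp [degIn, deg, neighborSet]

theorem deg_eq_degree [Fintype V] [DecidableRel G.Adj] (u : V) : deg G u = G.degree u := by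
  rw [deg, ← Nat.card_coe_set_eq, Nat.card_eq_fintype_card, card_neighborSet_eq_degree]

theorem inCore_zero (G : SimpleGraph V) (v : V) : inCore G 0 v :=
  ⟨{v}, rfl, fun _ _ => Nat.zero_le _⟩

theorem inCore_one_of_adj {w : V} (h : G.Adj v w) : inCore G 1 v := by
  refine ⟨{v, w}, Set.mem_insert v {w}, ?_⟩
  rintro u (rfl | rfl)
  · exact (Set.ncard_pos ((Set.toFinite _).sep _)).mpr ⟨w, by simp, h⟩
  · exact (Set.ncard_pos ((Set.toFinite _).sep _)).mpr ⟨v, by simp, h.symm⟩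

theorem inCore.le_deg [Finite V] (h : inCore G k v) : k ≤ deg G v := by
  obtain ⟨S, hvS, hS⟩ := h
  exact (hS v hvS).trans (Set.ncard_le_ncard fun _ hw => hw.2)

theorem coreNumber_eq_of_le_deg [Finite V] (hmin : ∀ u, k ≤ deg G u) (hv : deg G v ≤ k) :
    coreNumber G v = k :=
  IsGreatest.csSup_eq
    ⟨⟨Set.univ, trivial, fun u _ => (degIn_univ G u).symm ▸ hmin u⟩, fun _ h => h.le_deg.trans hv⟩

theorem coreNumber_eq_zero (hv : ∀ w, ¬ G.Adj v w) : coreNumber G v = 0 :=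
  IsGreatest.csSup_eq ⟨inCore_zero G v, fun _ ⟨S, hvS, hS⟩ => by simpa [degIn, hv] using hS v hvS⟩

theorem coreNumber_top [Fintype V] (v : V) :
    coreNumber (⊤ : SimpleGraph V) v = Fintype.card V - 1 := by
  classical
  have hdeg (u : V) : deg ⊤ u = Fintype.card V - 1 := by
    rw [deg_eq_degree, ← complete_graph_degree]
  exact coreNumber_eq_of_le_deg (fun u => (hdeg u).ge) (hdeg v).le

theorem kBreve_zero (G : SimpleGraph V) (v : V) : kBreve G v 0 = 0 := by
  refine coreNumber_eq_zero fun w hadj => hadj.ne (Subtype.ext ?_)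
  obtain ⟨hr, hd⟩ := w.2
  exact hr.dist_eq_zero_iff.mp (Nat.le_zero.mp hd)

theorem degIn_le_degIn_image [Finite W] (f : G →g H) (hf : Function.Injective f) (S : Set V)
    (u : V) : degIn G S u ≤ degIn H (f '' S) (f u) :=
  Set.ncard_le_ncard_of_injOn f (fun w hw => ⟨⟨w, hw.1, rfl⟩, f.map_adj hw.2⟩) hf.injOn

theorem inCore.map [Finite W] (f : G →g H) (hf : Function.Injective f) (h : inCore G k v) :
    inCore H k (f v) := by
  obtain ⟨S, hvS, hS⟩ := h
  refine ⟨f '' S, ⟨v, hvS, rfl⟩, ?_⟩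
  rintro _ ⟨u, hu, rfl⟩
  exact (hS u hu).trans (degIn_le_degIn_image f hf S u)

theorem SimpleGraph.Hom.dist_map_le (f : G →g H) {u w : V} (h : G.Reachable u w) :
    H.dist (f u) (f w) ≤ G.dist u w := by
  obtain ⟨p, hp⟩ := h.exists_walk_length_eq_dist
  simpa [hp] using dist_le (p.map f)

namespace SimpleGraph.Iso

variable (φ : G ≃g H)

theorem inCore_iff [Finite V] [Finite W] : inCore H k (φ v) ↔ inCore G k v :=
  ⟨fun h => by simpa using h.map φ.symm.toHom φ.symm.injective, fun h => h.map φ.toHom φ.injective⟩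

theorem coreNumber_eq [Finite V] [Finite W] (v : V) : coreNumber H (φ v) = coreNumber G v := by
  simp only [coreNumber, φ.inCore_iff]

theorem dist_eq (u w : V) : H.dist (φ u) (φ w) = G.dist u w := by
  by_cases h : G.Reachable u w
  · refine le_antisymm (φ.toHom.dist_map_le h) ?_
    simpa using φ.symm.toHom.dist_map_le (φ.reachable_iff.mpr h)
  · rw [dist_eq_zero_of_not_reachable h, dist_eq_zero_of_not_reachable (mt φ.reachable_iff.mp h)]

theorem preimage_ball (v : V) (δ : ℕ) : φ ⁻¹' _root_.ball H (φ v) δ = _root_.ball G v δ := by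
  ext u
  simp [_root_.ball, φ.reachable_iff, φ.dist_eq]

theorem kBreve_eq [Finite V] [Finite W] (v : V) (δ : ℕ) : kBreve H (φ v) δ = kBreve G v δ := by
  have hbij : Set.BijOn φ (_root_.ball G v δ) (_root_.ball H (φ v) δ) := by
    rw [← φ.preimage_ball]
    exact φ.bijective.bijOn_preimage
  unfold kBreve
  exact (φ.induce hbij).coreNumber_eq ⟨v, _⟩

end SimpleGraph.Iso

theorem exists_fin_coreNumber_kBreve_eq [Finite V] (G : SimpleGraph V) (v : V) (δ : ℕ) :
    ∃ (n : ℕ) (G' : SimpleGraph (Fin n)) (v' : Fin n),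
      coreNumber G' v' = coreNumber G v ∧ kBreve G' v' δ = kBreve G v δ := by
  obtain ⟨n, ⟨e⟩⟩ := Finite.exists_equiv_fin V
  exact ⟨n, G.map e.toEmbedding, Iso.map e G v, (Iso.map e G).coreNumber_eq v,
    (Iso.map e G).kBreve_eq v δ⟩

end CoreNumber

/-- Words over `Fin x` of length at most `D`, read as the vertices of the complete `x`-ary tree
of depth `D` in which the parent of `a :: l` is `l`. -/
abbrev TreeVertex (x D : ℕ) : Type := {l : List (Fin x) // l.length ≤ D}

instance (x D : ℕ) : Finite (TreeVertex x D) := (List.finite_length_le (Fin x) D).to_subtype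

def TreeVertex.root {x D : ℕ} : TreeVertex x D := ⟨[], Nat.zero_le D⟩

def leafCliqueTree (x D : ℕ) : SimpleGraph (TreeVertex x D) :=
  fromRel fun u w => (∃ a, w.1 = a :: u.1) ∨ (u.1.length = D ∧ w.1.length = D)

namespace leafCliqueTree

open TreeVertex

variable {x D : ℕ} {u w : TreeVertex x D}

theorem adj_cons (u : TreeVertex x D) (a : Fin x) (h : (a :: u.1).length ≤ D) :
    (leafCliqueTree x D).Adj u ⟨a :: u.1, h⟩ := by
  refine (fromRel_adj ..).mpr ⟨fun he => ?_, Or.inl (Or.inl ⟨a, rfl⟩)⟩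
  simpa using congrArg (fun z : TreeVertex x D => z.1.length) he

theorem adj_of_length_eq (hu : u.1.length = D) (hw : w.1.length = D) (hne : u ≠ w) :
    (leafCliqueTree x D).Adj u w :=
  (fromRel_adj ..).mpr ⟨hne, Or.inl (Or.inr ⟨hu, hw⟩)⟩

theorem length_le_succ_of_adj (h : (leafCliqueTree x D).Adj u w) :
    w.1.length ≤ u.1.length + 1 := by
  obtain ⟨-, (⟨a, h⟩ | ⟨hu, hw⟩) | (⟨a, h⟩ | ⟨hw, hu⟩)⟩ := (fromRel_adj ..).mp h
  · simp [h]
  · omega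
  · simp only [h, List.length_cons]; omega
  · omega

theorem eq_tail_of_adj (h : (leafCliqueTree x D).Adj u w) (hu : u.1.length < D)
    (hw : w.1.length ≤ u.1.length) : w.1 = u.1.tail := by
  obtain ⟨-, (⟨a, h⟩ | ⟨hu', -⟩) | (⟨a, h⟩ | ⟨-, hu'⟩)⟩ := (fromRel_adj ..).mp h
  · simp [h] at hw
  · omega
  · simp [h]
  · omega

theorem length_le_of_walk (p : (leafCliqueTree x D).Walk u w) :
    w.1.length ≤ u.1.length + p.length := by
  induction p with
  | nil => simp
  | cons h _ ih =>
    have := length_le_succ_of_adj h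
    rw [Walk.length_cons]
    omega

theorem exists_walk_root (u : TreeVertex x D) :
    ∃ p : (leafCliqueTree x D).Walk root u, p.length = u.1.length := by
  obtain ⟨l, hl⟩ := u
  induction l with
  | nil => exact ⟨Walk.nil, rfl⟩
  | cons a t ih =>
    obtain ⟨p, hp⟩ := ih (by simp only [List.length_cons] at hl; omega)
    exact ⟨p.concat (adj_cons _ a hl), by simp only [Walk.length_concat, hp]; rfl⟩

theorem dist_root (u : TreeVertex x D) : (leafCliqueTree x D).dist root u = u.1.length := by
  obtain ⟨p, hp⟩ := exists_walk_root u
  refine le_antisymm (hp ▸ dist_le p) ?_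
  have hreach : (leafCliqueTree x D).Reachable root u := ⟨p⟩
  obtain ⟨q, hq⟩ := hreach.exists_walk_length_eq_dist
  have := length_le_of_walk q
  rw [hq] at this
  simpa [root] using this

theorem mem_ball_root_iff {r : ℕ} :
    u ∈ _root_.ball (leafCliqueTree x D) root r ↔ u.1.length ≤ r := by
  obtain ⟨p, -⟩ := exists_walk_root u
  simp [_root_.ball, dist_root, show (leafCliqueTree x D).Reachable root u from ⟨p⟩]

theorem deg_root_le (hD : 1 ≤ D) : deg (leafCliqueTree x D) root ≤ x := by
  have hsub : (leafCliqueTree x D).neighborSet root ⊆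
      Set.range fun a : Fin x => (⟨[a], by simpa using hD⟩ : TreeVertex x D) := by
    intro w (hw : (leafCliqueTree x D).Adj root w)
    obtain ⟨-, (⟨a, h⟩ | ⟨h, -⟩) | (⟨a, h⟩ | ⟨-, h⟩)⟩ := (fromRel_adj ..).mp hw
    · exact ⟨a, Subtype.ext h.symm⟩
    · simp only [root, List.length_nil] at h; omega
    · simp [root] at h
    · simp only [root, List.length_nil] at h; omega
  calc deg (leafCliqueTree x D) root ≤ (Set.range _).ncard := Set.ncard_le_ncard hsub
    _ ≤ Nat.card (Fin x) := by rw [← Nat.card_coe_set_eq]; exact Finite.card_range_le _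
    _ = x := Nat.card_fin x

theorem le_deg_of_length_lt (hu : u.1.length < D) : x ≤ deg (leafCliqueTree x D) u := by
  have h (a : Fin x) : (a :: u.1).length ≤ D := by simpa using hu
  have hinj : Set.InjOn (fun a => (⟨a :: u.1, h a⟩ : TreeVertex x D)) Set.univ :=
    fun a _ b _ hab => (List.cons.inj (congrArg Subtype.val hab)).1
  simpa [deg] using Set.ncard_le_ncard_of_injOn (t := (leafCliqueTree x D).neighborSet u) _
    (fun a _ => adj_cons u a (h a)) hinj

theorem le_deg_of_length_eq (hD : 1 ≤ D) (hu : u.1.length = D) :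
    x ≤ deg (leafCliqueTree x D) u := by
  obtain ⟨_ | ⟨c, t⟩, hl⟩ := u
  · simp only [List.length_nil] at hu; omega
  simp only [List.length_cons] at hu
  let parent : TreeVertex x D := ⟨t, by omega⟩
  let sibling (b : Fin x) : TreeVertex x D := ⟨b :: t, by simp only [List.length_cons]; omega⟩
  -- the sibling `c :: t` would be the leaf itself, so the parent takes its place
  let f (b : Fin x) : TreeVertex x D := if b = c then parent else sibling b
  have hadj (b : Fin x) : (leafCliqueTree x D).Adj ⟨c :: t, hl⟩ (f b) := by
    by_cases hb : b = c
    · simpa [f, hb] using (adj_cons parent c hl).symm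
    · simp only [f, hb, if_false]
      refine adj_of_length_eq (by simpa using hu) (by simpa [sibling] using hu) fun he => hb ?_
      exact (List.cons.inj (congrArg Subtype.val he)).1.symm
  have hinj : Set.InjOn f Set.univ := by
    intro a _ b _ hab
    by_cases ha : a = c <;> by_cases hb : b = c
    · rw [ha, hb]
    all_goals
      simp only [f, ha, hb, if_true, if_false] at hab
      have := congrArg Subtype.val hab
      simp_all [parent, sibling]
  simpa [deg] using Set.ncard_le_ncard_of_injOn f (fun b _ => hadj b) hinj

theorem coreNumber_root (hD : 1 ≤ D) : coreNumber (leafCliqueTree x D) root = x := by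
  refine coreNumber_eq_of_le_deg (fun u => ?_) (deg_root_le hD)
  rcases (show u.1.length ≤ D from u.2).lt_or_eq with hu | hu
  · exact le_deg_of_length_lt hu
  · exact le_deg_of_length_eq hD hu

theorem kBreve_root {r : ℕ} (hx : 1 ≤ x) (hr : 1 ≤ r) (hrD : r < D) :
    kBreve (leafCliqueTree x D) root r = 1 := by
  set B := _root_.ball (leafCliqueTree x D) root r
  have hchild : (⟨[⟨0, hx⟩], by simpa using hr.trans hrD.le⟩ : TreeVertex x D) ∈ B :=
    mem_ball_root_iff.mpr (by simpa using hr)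
  refine IsGreatest.csSup_eq ⟨inCore_one_of_adj (w := ⟨_, hchild⟩) (adj_cons root ⟨0, hx⟩ _), ?_⟩
  rintro k ⟨S, hrootS, hS⟩
  -- a deepest vertex of `S` can only have its parent as a neighbour in `S`
  obtain ⟨u, huS, hmax⟩ :=
    S.toFinite.exists_maximalFor (fun z : B => z.1.1.length) S ⟨_, hrootS⟩
  have hparent (w : B) (hwS : w ∈ S) (hadj : ((leafCliqueTree x D).induce B).Adj u w) :
      w.1.1 = u.1.1.tail :=
    eq_tail_of_adj hadj ((mem_ball_root_iff.mp u.2).trans_lt hrD)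
      (le_of_not_gt fun h => (hmax hwS h.le).not_gt h)
  refine (hS u huS).trans ((Set.ncard_le_one (Set.toFinite _)).mpr ?_)
  rintro w₁ ⟨hw₁, h₁⟩ w₂ ⟨hw₂, h₂⟩
  exact Subtype.ext (Subtype.ext ((hparent w₁ hw₁ h₁).trans (hparent w₂ hw₂ h₂).symm))

end leafCliqueTree

/-- for every `δ ≥ 0` and every `x ≥ 1` there is a finite simple graph and a
vertex `v` with `k(v) - k̆_δ(v) = x - 1`. -/
theorem stmt15 (δ x : ℕ) (hx : 1 ≤ x) :
    ∃ (n : ℕ) (G : SimpleGraph (Fin n)) (v : Fin n),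
      coreNumber G v - kBreve G v δ = x - 1 := by
  cases δ with
  | zero =>
    refine ⟨x, ⊤, ⟨0, hx⟩, ?_⟩
    rw [coreNumber_top, kBreve_zero, Fintype.card_fin, Nat.sub_zero]
  | succ d =>
    obtain ⟨n, G, v, hcore, hkb⟩ :=
      exists_fin_coreNumber_kBreve_eq (leafCliqueTree x (d + 2)) TreeVertex.root (d + 1)
    refine ⟨n, G, v, ?_⟩
    rw [hcore, hkb, leafCliqueTree.coreNumber_root (by omega),
      leafCliqueTree.kBreve_root hx (by omega) (by omega)]
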